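/- With layers as above, every point of layer k+1 is adjacent to the last (largest in boundary order) point of layer k. -/

import Mathlib

/-- `inTL p q` : point `p` lies in the top-left quadrant of point `q`. -/
def inTL (p q : ℝ × ℝ) : Prop := p.1 < q.1 ∧ q.2 < p.2

/-- The permutation graph of a point set `S`: two points are adjacent iff both belong
to `S` and one lies in the top-left quadrant of the other. -/
def pGraph (S : Finset (ℝ × ℝ)) : SimpleGraph (ℝ × ℝ) where
  Adj p q := p ∈ S ∧ q ∈ S ∧ (inTL p q ∨ inTL q p)
  symm := ⟨by rintro p q ⟨hp, hq, h⟩; exact ⟨hq, hp, h.symm⟩⟩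
  loopless := ⟨by rintro p ⟨-, -, ⟨h, _⟩ | ⟨h, _⟩⟩ <;> exact lt_irrefl _ h⟩

/-- `p` is on the top boundary of `S`: its top-left quadrant contains no point of `S`. -/
def onTop (S : Finset (ℝ × ℝ)) (p : ℝ × ℝ) : Prop := ∀ q ∈ S, ¬ inTL q p

/-- `p` is on the bottom boundary of `S`: its bottom-right quadrant contains no point of `S`. -/
def onBottom (S : Finset (ℝ × ℝ)) (p : ℝ × ℝ) : Prop := ∀ q ∈ S, ¬ inTL p q

/-- All points of `S` have pairwise distinct x-coordinates and pairwise distinct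
y-coordinates. -/
def DistinctCoords (S : Finset (ℝ × ℝ)) : Prop :=
  ∀ p ∈ S, ∀ q ∈ S, p ≠ q → p.1 ≠ q.1 ∧ p.2 ≠ q.2

/-!
Edges between consecutive layers `k` and `k + 1` all have the same orientation, the endpoint in
layer `k` being the top-left one exactly when `k` is even: `p₀` is leftmost, and two consecutive
edges of equal orientation would compose to a shortcut. In particular the only bottom boundary
point of an even layer can be `p₀`.

Let `u` be a boundary point of layer `k + 1`. If `u` lies left of `lst`, a geodesic from `p₀` to
`lst` crosses the vertical line through `u` along an edge `a b`, with `a` top-left of `b`. Being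
on the boundary, `u` is adjacent to `a` or to `b`; as `a` lies in a layer below `k`, it is `b`,
which is then in layer `k`, so `b = lst`. If `u` lies right of and above `lst`, the neighbour `w`
of `u` in layer `k` that is extreme in the direction of the orientation is a boundary point of
layer `k`. For odd `k` it lies right of `u`, hence of `lst`; for even `k` it lies top-left of
`lst`, so `lst` is on the bottom boundary, hence `lst = p₀`, which cannot be right of `w`.
-/

namespace SimpleGraph

variable {V : Type*} {G : SimpleGraph V}

lemma Adj.dist_le_dist_add_one {u v w : V} (h : G.Adj v w) : G.dist u w ≤ G.dist u v + 1 := by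
  rcases h.diff_dist_adj (u := u) with h | h | h <;> omega

lemma Walk.dist_getVert_of_length_eq_dist {u v : V} {p : G.Walk u v}
    (hp : p.length = G.dist u v) {i : ℕ} (hi : i ≤ p.length) : G.dist u (p.getVert i) = i := by
  rw [← length_eq_dist_of_subwalk hp (p.isSubwalk_take i), Walk.take_length]
  omega

lemma exists_adj_dist_eq_of_dist_eq_succ {u v : V} {n : ℕ} (hd : G.dist u v = n + 1) :
    ∃ w, G.Adj w v ∧ G.dist u w = n := by
  obtain ⟨p, hp⟩ := exists_walk_of_dist_ne_zero (by omega : G.dist u v ≠ 0)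
  refine ⟨p.getVert n, ?_, p.dist_getVert_of_length_eq_dist hp (by omega)⟩
  simpa [p.getVert_of_length_le (hp.trans hd).le] using p.adj_getVert_succ (i := n) (by omega)

lemma Walk.exists_getVert_boundary {P : V → Prop} :
    ∀ {u v : V} (p : G.Walk u v), P u → ¬ P v →
      ∃ i < p.length, P (p.getVert i) ∧ ¬ P (p.getVert (i + 1))
  | _, _, .nil, hu, hv => absurd hu hv
  | _, _, .cons (v := w) h q, hu, hv => by
    by_cases hw : P w
    · obtain ⟨i, hi, hPi, hPi'⟩ := q.exists_getVert_boundary hw hv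
      exact ⟨i + 1, by simpa using hi, by simpa using hPi, by simpa using hPi'⟩
    · exact ⟨0, by simp, by simpa using hu, by simpa using hw⟩

end SimpleGraph

open SimpleGraph

lemma inTL.trans {p q r : ℝ × ℝ} (hpq : inTL p q) (hqr : inTL q r) : inTL p r :=
  ⟨hpq.1.trans hqr.1, hqr.2.trans hpq.2⟩

namespace pGraph

variable {S : Finset (ℝ × ℝ)} {p₀ : ℝ × ℝ}

lemma adj_of_inTL {p q : ℝ × ℝ} (hp : p ∈ S) (hq : q ∈ S) (h : inTL p q) : (pGraph S).Adj p q :=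
  ⟨hp, hq, Or.inl h⟩

theorem inTL_iff_even_of_adj (hleft : ∀ q ∈ S, q ≠ p₀ → p₀.1 < q.1) :
    ∀ {k : ℕ} {v u : ℝ × ℝ}, (pGraph S).dist p₀ v = k → (pGraph S).dist p₀ u = k + 1 →
      (pGraph S).Adj v u → (inTL v u ↔ Even k)
  | 0, v, u, hv, hu, hvu => by
    have hvp : p₀ = v :=
      ((Reachable.of_dist_ne_zero (by omega)).trans hvu.symm.reachable).dist_eq_zero_iff.mp hv
    have hup : u ≠ p₀ := by rintro rfl; simp at hu
    subst hvp
    simp only [Even.zero, iff_true]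
    exact hvu.2.2.resolve_right fun h => (hleft u hvu.2.1 hup).not_gt h.1
  | k + 1, v, u, hv, hu, hvu => by
    obtain ⟨v', hv'v, hv'⟩ := exists_adj_dist_eq_of_dist_eq_succ hv
    have ih := inTL_iff_even_of_adj hleft hv' hv hv'v
    have no_shortcut : ∀ {w}, w ∈ S → (inTL w u ∨ inTL u w) → (pGraph S).dist p₀ w ≠ k := by
      intro w hw h hw'
      have := (show (pGraph S).Adj w u from ⟨hw, hvu.2.1, h⟩).dist_le_dist_add_one (u := p₀)
      omega
    rw [Nat.even_add_one, ← ih]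
    constructor
    · exact fun h h' => no_shortcut hv'v.1 (Or.inl (h'.trans h)) hv'
    · intro h
      by_contra h'
      exact no_shortcut hv'v.1 (Or.inr ((hvu.2.2.resolve_left h').trans
        (hv'v.2.2.resolve_left h))) hv'

theorem eq_of_onBottom_of_even (hleft : ∀ q ∈ S, q ≠ p₀ → p₀.1 < q.1) {x : ℝ × ℝ}
    (hx : (pGraph S).Reachable p₀ x) (hB : onBottom S x) (he : Even ((pGraph S).dist p₀ x)) :
    x = p₀ := by
  by_cases h0 : (pGraph S).dist p₀ x = 0
  · exact (hx.dist_eq_zero_iff.mp h0).symm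
  · obtain ⟨j, hj⟩ := Nat.exists_eq_add_one_of_ne_zero h0
    obtain ⟨v, hvx, hv⟩ := exists_adj_dist_eq_of_dist_eq_succ hj
    have hodd : ¬ Even j := by rwa [hj, Nat.even_add_one] at he
    exact (hB v hvx.1 (hvx.2.2.resolve_left (mt (inTL_iff_even_of_adj hleft hv hj hvx).mp hodd))).elim

/-- For `R = inTL` the conclusion `∀ z ∈ S, ¬ R z w` is `onTop S w`; for the converse
relation it is `onBottom S w`. -/
theorem exists_extreme_of_orient {R : ℝ × ℝ → ℝ × ℝ → Prop} (φ : ℝ × ℝ → ℝ)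
    (hR_adj : ∀ a ∈ S, ∀ b ∈ S, R a b → (pGraph S).Adj a b)
    (hR_trans : ∀ a b c, R a b → R b c → R a c) (hφ : ∀ a b, R a b → φ b < φ a) {k : ℕ}
    (horient : ∀ w z, (pGraph S).dist p₀ w = k → (pGraph S).dist p₀ z = k + 1 →
      (pGraph S).Adj w z → R w z)
    {u : ℝ × ℝ} (hu : u ∈ S) (hdu : (pGraph S).dist p₀ u = k + 1) :
    ∃ w ∈ S, (pGraph S).dist p₀ w = k ∧ R w u ∧ ∀ z ∈ S, ¬ R z w := by
  classical
  obtain ⟨v, hvu, hdv⟩ := exists_adj_dist_eq_of_dist_eq_succ hdu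
  obtain ⟨w, hwC, hwmax⟩ := (S.filter fun z => R z u ∧ (pGraph S).dist p₀ z = k).exists_max_image
    φ ⟨v, Finset.mem_filter.mpr ⟨hvu.1, horient v u hdv hdu hvu, hdv⟩⟩
  obtain ⟨hw, hwu, hdw⟩ := Finset.mem_filter.mp hwC
  refine ⟨w, hw, hdw, hwu, fun z hz hzw => ?_⟩
  have hzu := hR_trans _ _ _ hzw hwu
  have h1 := (hR_adj z hz u hu hzu).dist_le_dist_add_one (u := p₀)
  have h2 := (hR_adj z hz w hw hzw).symm.dist_le_dist_add_one (u := p₀)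
  obtain hdz | hdz : (pGraph S).dist p₀ z = k ∨ (pGraph S).dist p₀ z = k + 1 := by omega
  · exact (hφ _ _ hzw).not_ge (hwmax z (Finset.mem_filter.mpr ⟨hz, hzu, hdz⟩))
  · exact (hφ _ _ hzw).asymm (hφ _ _ (horient w z hdw hdz (hR_adj z hz w hw hzw).symm))

theorem adj_of_fst_lt_fst (hS : DistinctCoords S) (hleft : ∀ q ∈ S, q ≠ p₀ → p₀.1 < q.1)
    {k : ℕ} {z u : ℝ × ℝ} (hz : (pGraph S).Reachable p₀ z) (hdz : (pGraph S).dist p₀ z = k)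
    (hu : u ∈ S) (hub : onTop S u ∨ onBottom S u) (hdu : (pGraph S).dist p₀ u = k + 1)
    (hx : u.1 < z.1) : (pGraph S).Adj z u := by
  obtain ⟨W, hW⟩ := hz.exists_walk_length_eq_dist
  have hup : u ≠ p₀ := by rintro rfl; simp at hdu
  -- the geodesic from `p₀` to `z` crosses the vertical line through `u` along an edge `a b`
  obtain ⟨i, hi, hai, hbi⟩ := W.exists_getVert_boundary (P := fun q => q.1 ≤ u.1)
    (hleft u hu hup).le (not_le.mpr hx)
  set a := W.getVert i
  set b := W.getVert (i + 1)
  have hab : (pGraph S).Adj a b := W.adj_getVert_succ hi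
  have hda : (pGraph S).dist p₀ a = i := W.dist_getVert_of_length_eq_dist hW hi.le
  have hdb : (pGraph S).dist p₀ b = i + 1 := W.dist_getVert_of_length_eq_dist hW hi
  have hau : a.1 < u.1 := hai.lt_of_ne (hS a hab.1 u hu (by rintro rfl; omega)).1
  have hab' : inTL a b := hab.2.2.resolve_right fun h => h.1.not_ge (hai.trans (le_of_not_ge hbi))
  rcases hub with hT | hB
  · have hay : a.2 < u.2 := (hS a hab.1 u hu (by rintro rfl; omega)).2.lt_or_gt.resolve_right
      fun h => hT a hab.1 ⟨hau, h⟩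
    have hbu : (pGraph S).Adj b u :=
      ⟨hab.2.1, hu, Or.inr ⟨lt_of_not_ge hbi, hab'.2.trans hay⟩⟩
    have hbz : b = z := by
      have := hbu.dist_le_dist_add_one (u := p₀)
      have hlen : i + 1 = W.length := by omega
      rw [← W.getVert_length, ← hlen]
    exact hbz ▸ hbu
  · have hby : u.2 < b.2 := (hS b hab.2.1 u hu (by rintro rfl; omega)).2.lt_or_gt.resolve_left
      fun h => hB b hab.2.1 ⟨lt_of_not_ge hbi, h⟩
    have := (adj_of_inTL hab.1 hu ⟨hau, hby.trans hab'.2⟩).dist_le_dist_add_one (u := p₀)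
    omega

theorem adj_of_fst_lt_fst_of_last (hS : DistinctCoords S)
    (hreach : ∀ q ∈ S, (pGraph S).Reachable p₀ q) (hleft : ∀ q ∈ S, q ≠ p₀ → p₀.1 < q.1)
    {k : ℕ} {lst u : ℝ × ℝ} (hlst : lst ∈ S) (hlstb : onTop S lst ∨ onBottom S lst)
    (hdlst : (pGraph S).dist p₀ lst = k)
    (hmax : ∀ w ∈ S, (onTop S w ∨ onBottom S w) → (pGraph S).dist p₀ w = k → w.1 ≤ lst.1)
    (hu : u ∈ S) (hdu : (pGraph S).dist p₀ u = k + 1) (hx : lst.1 < u.1) :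
    (pGraph S).Adj lst u := by
  have hne : lst ≠ u := by rintro rfl; omega
  refine ⟨hlst, hu, Or.inl ⟨hx, (hS u hu lst hlst hne.symm).2.lt_or_gt.resolve_right ?_⟩⟩
  intro hy
  rcases Nat.even_or_odd k with hk | hk
  · obtain ⟨w, hw, hdw, hwu, hwT⟩ := exists_extreme_of_orient (R := inTL) Prod.snd
      (fun _ ha _ hb h => adj_of_inTL ha hb h) (fun _ _ _ => inTL.trans) (fun _ _ h => h.2)
      (fun _ _ hw hz h => (inTL_iff_even_of_adj hleft hw hz h).mpr hk) hu hdu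
    have hwl : w ≠ lst := by rintro rfl; exact hy.not_gt hwu.2
    have hwlst : inTL w lst :=
      ⟨(hmax w hw (Or.inl hwT) hdw).lt_of_ne (hS w hw lst hlst hwl).1, hy.trans hwu.2⟩
    have hlp : lst = p₀ := eq_of_onBottom_of_even hleft (hreach lst hlst)
      (hlstb.resolve_left fun hT => hT w hw hwlst) (hdlst ▸ hk)
    exact (hleft w hw (hlp ▸ hwl)).not_gt (hlp ▸ hwlst.1)
  · obtain ⟨w, hw, hdw, hwu, hwB⟩ := exists_extreme_of_orient (R := fun a b => inTL b a)
      (fun p => -p.2) (fun _ ha _ hb h => (adj_of_inTL hb ha h).symm)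
      (fun _ _ _ hab hbc => hbc.trans hab) (fun _ _ h => neg_lt_neg h.2)
      (fun _ _ hw hz h => h.2.2.resolve_left
        (mt (inTL_iff_even_of_adj hleft hw hz h).mp (Nat.not_even_iff_odd.mpr hk))) hu hdu
    exact (hmax w hw (Or.inr hwB) hdw).not_gt (hx.trans hwu.1)

end pGraph

/-- the last (largest in boundary order) point of layer `k` is adjacent
to every point of layer `k + 1`. -/
theorem stmt9 (S : Finset (ℝ × ℝ)) (hS : DistinctCoords S)
    (hconn : ∀ p ∈ S, ∀ q ∈ S, (pGraph S).Reachable p q)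
    (p₀ : ℝ × ℝ) (hp₀ : p₀ ∈ S) (hleft : ∀ q ∈ S, q ≠ p₀ → p₀.1 < q.1)
    (L : ℝ × ℝ → ℕ) (hL : ∀ w, L w = (pGraph S).dist p₀ w)
    (k : ℕ) (lst : ℝ × ℝ) (hlst : lst ∈ S)
    (hlstb : onTop S lst ∨ onBottom S lst) (hlstL : L lst = k)
    (hmax : ∀ w ∈ S, (onTop S w ∨ onBottom S w) → L w = k → w.1 ≤ lst.1) :
    ∀ u ∈ S, (onTop S u ∨ onBottom S u) → L u = k + 1 → (pGraph S).Adj lst u := by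
  intro u hu hub huL
  rw [hL] at hlstL huL
  simp only [hL] at hmax
  have hne : lst ≠ u := by rintro rfl; omega
  rcases (hS lst hlst u hu hne).1.lt_or_gt with hx | hx
  · exact pGraph.adj_of_fst_lt_fst_of_last hS (hconn p₀ hp₀) hleft hlst hlstb hlstL hmax hu huL hx
  · exact pGraph.adj_of_fst_lt_fst hS hleft (hconn p₀ hp₀ lst hlst) hlstL hu hub huL hx
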